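/- In an AL-monoid, B-linearity implies D-linearity: if a finite tuple (p₁,...,pₙ) of distinct points (n ≥ 3) satisfies metric betweenness (p_i, p_j, p_k)M for all 1 ≤ i < j < k ≤ n, then p₁*pₙ = Σ_{i=1}^{n-1} (p_i * p_{i+1}). -/
import Mathlib


/-- An Autometrized lattice ordered monoid (AL-monoid). -/
class ALMonoid (A : Type*) extends Lattice A, AddCommMonoid A where
  amul : A → A → A
  add_le_add_left' : ∀ a b : A, a ≤ b → ∀ c : A, c + a ≤ c + b
  amul_core : ∀ a b : A, amul a (a ⊓ b) + b = a ⊔ b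
  add_contract : ∀ a x y : A, amul (a + x) (a + y) ≤ amul x y
  sup_contract : ∀ a x y : A, amul (a ⊔ x) (a ⊔ y) ≤ amul x y
  inf_contract : ∀ a x y : A, amul (a ⊓ x) (a ⊓ y) ≤ amul x y
  amul_contract : ∀ a x y : A, amul (amul a x) (amul a y) ≤ amul x y
  inf_amul_sup : ∀ a b : A, amul a (a ⊔ b) ⊓ amul b (a ⊔ b) = 0
  amul_nonneg : ∀ a b : A, 0 ≤ amul a b
  amul_eq_zero_iff : ∀ a b : A, amul a b = 0 ↔ a = b
  amul_comm : ∀ a b : A, amul a b = amul b a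
  amul_triangle : ∀ a b c : A, amul a b ≤ amul a c + amul c b

open ALMonoid

infixl:70 " ⋆ " => ALMonoid.amul

theorem stmt12 {A : Type*} [ALMonoid A] (n : ℕ) (hn : 3 ≤ n) (p : ℕ → A)
    (hdist : ∀ i j, i < n → j < n → i ≠ j → p i ≠ p j)
    (hB : ∀ i j k, i < j → j < k → k < n → p i ⋆ p j + p j ⋆ p k = p i ⋆ p k) :
    p 0 ⋆ p (n - 1) = ∑ i ∈ Finset.range (n - 1), p i ⋆ p (i + 1) := by
  have key : ∀ k, k < n → p 0 ⋆ p k = ∑ i ∈ Finset.range k, p i ⋆ p (i + 1) := by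
    intro k
    induction k with
    | zero =>
      intro _
      simp [(amul_eq_zero_iff (p 0) (p 0)).mpr rfl]
    | succ k ih =>
      intro hk
      rcases Nat.eq_zero_or_pos k with h0 | hpk
      · subst h0; simp
      · rw [Finset.sum_range_succ, ← ih (lt_trans (Nat.lt_succ_self k) hk),
          hB 0 k (k + 1) hpk (Nat.lt_succ_self k) hk]
  exact key (n - 1) (by omega)
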